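/- arXiv:math/9201242 — 2 statements merged into one kernel-verified Lean document; each statement's English description precedes it below -/
import Mathlib

section
/- Let k < m < n−1 be natural numbers. There exist stationary sets S ⊆ {α < ω_n : cf α = ω_k} and A ⊆ {α < ω_n : cf α = ω_m} such that S does not reflect at any γ ∈ A, i.e., S ∩ γ is nonstationary in γ for all γ ∈ A. (Assume {α < ω_n : cf α = ω_k} splits into ω_{m+1} pairwise disjoint stationary sets.) -/
/-- `C` is a closed unbounded (club) subset of the ordinal `γ`:
it is a set of ordinals below `γ`, unbounded in `γ`, and closed
(contains each of its limit points below `γ`). -/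
def IsClubIn (C : Set Ordinal) (γ : Ordinal) : Prop :=
  C ⊆ Set.Iio γ ∧ (∀ β < γ, ∃ α ∈ C, β ≤ α) ∧
    ∀ α < γ, 0 < α → (∀ β < α, ∃ c ∈ C, β < c ∧ c < α) → α ∈ C

/-- `S` is stationary in the ordinal `γ`: it meets every club subset of `γ`. -/
def IsStatIn (S : Set Ordinal) (γ : Ordinal) : Prop :=
  ∀ C, IsClubIn C γ → (S ∩ C).Nonempty

/-- The order type of a set of ordinals. -/
noncomputable def otp (s : Set Ordinal) : Ordinal :=
  Ordinal.type ((· < ·) : s → s → Prop)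

/-!
For `i < ω_{m+1}` let `A i` be the set of `γ < ω_n` of cofinality `ω_m` at which `T i` does not
reflect. At such a `γ` at most `ℵ_m` of the pairwise disjoint sets `T i` can reflect: each of them
must meet a fixed club of `γ` of size `cf γ = ℵ_m`. Hence the `A i`, fewer than `ℵ_n` many, cover
the stationary set `S^n_m`, so one of them is stationary, and `S = T i`, `A = A i` work.
-/

open Cardinal Function Ordinal Order Set

universe u v w

theorem dirSupClosed_setOf_forall_lt_inter_Ioo_nonempty {α : Type*} [LinearOrder α] (s : Set α) :
    DirSupClosed {x | ∀ y < x, (s ∩ Ioo y x).Nonempty} := by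
  intro d hd _ _ a ha y hy
  obtain ⟨c, hc, hyc⟩ := (lt_isLUB_iff ha).1 hy
  obtain ⟨u, hu, hyu, huc⟩ := hd hc y hyc
  exact ⟨u, hu, hyu, huc.trans_le (ha.1 hc)⟩

section WellOrder

variable {α : Type*} [LinearOrder α] [WellFoundedLT α]

theorem isCofinal_setOf_forall_lt_inter_Ioo_nonempty (hα : ℵ₀ < cof α) {s : Set α}
    (hs : IsCofinal s) : IsCofinal {x | ∀ y < x, (s ∩ Ioo y x).Nonempty} := by
  intro a
  have : Nonempty α := ⟨a⟩
  have : NoMaxOrder α := (noTopOrder_iff_noMaxOrder α).1 <|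
    one_lt_cof_iff.1 (one_lt_aleph0.trans hα)
  let := WellFoundedLT.toOrderBot α
  let := WellFoundedLT.conditionallyCompleteLinearOrderBot α
  have hnext : ∀ y, ∃ z ∈ s, y < z := fun y ↦
    let ⟨y', hy'⟩ := exists_gt y
    let ⟨z, hz, hyz⟩ := hs y'
    ⟨z, hz, hy'.trans_le hyz⟩
  choose g hgs hg using hnext
  set seq : ℕ → α := fun n ↦ g^[n] a
  have hseq : ∀ n, seq (n + 1) = g (seq n) := fun n ↦ iterate_succ_apply' g n a
  have hbdd : BddAbove (range seq) := .of_not_isCofinal fun h ↦ (cof_le h).not_gt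
    (hα.trans_le' (by simpa using mk_range_le_lift (f := seq)))
  refine ⟨⨆ n, seq n, fun y hy ↦ ?_, le_ciSup hbdd 0⟩
  obtain ⟨n, hn⟩ := exists_lt_of_lt_ciSup hy
  refine ⟨seq (n + 1), hseq n ▸ hgs _, hn.trans (hseq n ▸ hg _), ?_⟩
  calc seq (n + 1) < seq (n + 2) := hseq (n + 1) ▸ hg _
    _ ≤ ⨆ n, seq n := le_ciSup hbdd _

theorem mk_setOf_forall_lt_inter_Ioo_nonempty_le {s : Set α} (hs : IsCofinal s) :
    #{x | ∀ y < x, (s ∩ Ioo y x).Nonempty} ≤ #s := by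
  let f (x : α) : s :=
    ⟨wellFounded_lt.min (s ∩ Ici x) (hs x), (wellFounded_lt.min_mem (s ∩ Ici x) (hs x)).1⟩
  have hf : StrictMono fun x : {x | ∀ y < x, (s ∩ Ioo y x).Nonempty} ↦ f x := by
    intro x x' hxx'
    obtain ⟨u, hu, hxu, hux'⟩ := x'.2 x hxx'
    calc (f x : α) ≤ u := not_lt.1 (wellFounded_lt.not_lt_min (s ∩ Ici x) ⟨hu, hxu.le⟩)
      _ < x' := hux'
      _ ≤ f x' := (wellFounded_lt.min_mem (s ∩ Ici x') (hs x')).2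
  exact mk_le_of_injective hf.injective

theorem exists_isClub_mk_le_cof (hα : ℵ₀ < cof α) : ∃ C : Set α, IsClub C ∧ #C ≤ cof α := by
  obtain ⟨s, hs, hcard⟩ := exists_cof_eq α
  exact ⟨_, ⟨dirSupClosed_setOf_forall_lt_inter_Ioo_nonempty s,
    isCofinal_setOf_forall_lt_inter_Ioo_nonempty hα hs⟩,
    hcard ▸ mk_setOf_forall_lt_inter_Ioo_nonempty_le hs⟩

theorem lift_mk_le_lift_cof_of_isStationary {ι : Type u} {α : Type v} [LinearOrder α]
    [WellFoundedLT α] (hα : ℵ₀ < cof α) {T : ι → Set α} (hT : ∀ i, IsStationary (T i))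
    (hdisj : Pairwise (Disjoint on T)) : lift.{v} #ι ≤ lift.{u} (cof α) := by
  obtain ⟨C, hC, hcard⟩ := exists_isClub_mk_le_cof hα
  choose x hxT hxC using fun i ↦ hT i hC
  have hinj : Injective fun i ↦ (⟨x i, hxC i⟩ : C) := fun i j hij ↦ by
    by_contra hne
    exact (hdisj hne).ne_of_mem (hxT i) (hxT j) (congrArg Subtype.val hij)
  exact (lift_mk_le_lift_mk_of_injective hinj).trans (lift_le.2 hcard)

end WellOrder

theorem isClubIn_image_val {γ : Ordinal} {C : Set (Iio γ)} (hC : IsClub C) :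
    IsClubIn (Subtype.val '' C) γ := by
  refine ⟨?_, fun β hβ ↦ ?_, fun α hαγ hα hlim ↦ ?_⟩
  · rintro _ ⟨x, -, rfl⟩
    exact x.2
  · obtain ⟨c, hc, hβc⟩ := hC.isCofinal ⟨β, hβ⟩
    exact ⟨c, mem_image_of_mem _ hc, hβc⟩
  · let a : Iio γ := ⟨α, hαγ⟩
    have hlub : IsLUB {c ∈ C | c < a} a := by
      refine ⟨fun c hc ↦ hc.2.le, fun b hb ↦ not_lt.1 fun hbα ↦ ?_⟩
      obtain ⟨_, ⟨c, hc, rfl⟩, hbc, hcα⟩ := hlim b hbα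
      exact (hb ⟨hc, hcα⟩).not_gt hbc
    obtain ⟨_, ⟨c, hc, rfl⟩, -, hcα⟩ := hlim 0 hα
    exact mem_image_of_mem _ (hC.isLUB_mem (sep_subset _ _) ⟨c, hc, hcα⟩ hlub)

theorem IsClubIn.isClub_preimage_val {γ : Ordinal} {C : Set Ordinal} (hC : IsClubIn C γ) :
    IsClub (Subtype.val ⁻¹' C : Set (Iio γ)) := by
  refine ⟨dirSupClosed_iff_of_linearOrder.2 fun d hd hne a ha ↦ ?_, fun b ↦ ?_⟩
  · by_cases had : a ∈ d
    · exact hd had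
    have hlt : ∀ c ∈ d, c < a := fun c hc ↦ (ha.1 hc).lt_of_ne (ne_of_mem_of_not_mem hc had)
    obtain ⟨c, hc⟩ := hne
    refine hC.2.2 a a.2 (zero_le.trans_lt (hlt c hc)) fun β hβ ↦ ?_
    obtain ⟨c', hc', hβc'⟩ := (lt_isLUB_iff ha).1 (show (⟨β, hβ.trans a.2⟩ : Iio γ) < a from hβ)
    exact ⟨c', hd hc', hβc', hlt c' hc'⟩
  · obtain ⟨c, hc, hbc⟩ := hC.2.1 b b.2
    exact ⟨⟨c, hC.1 hc⟩, hc, hbc⟩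

theorem isStatIn_iff_isStationary {S : Set Ordinal} {γ : Ordinal} :
    IsStatIn S γ ↔ IsStationary (Subtype.val ⁻¹' S : Set (Iio γ)) := by
  refine ⟨fun hS C hC ↦ ?_, fun hS C hC ↦ ?_⟩
  · obtain ⟨_, hx, c, hc, rfl⟩ := hS _ (isClubIn_image_val hC)
    exact ⟨c, hx, hc⟩
  · obtain ⟨c, hcS, hcC⟩ := hS hC.isClub_preimage_val
    exact ⟨c, hcS, hcC⟩

theorem Ordinal.enumOrd_lt_of_lt_ord_cof {s : Set Ordinal.{u}} {γ : Ordinal.{u}}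
    (hs : ∀ β < γ, ∃ c ∈ s, β ≤ c ∧ c < γ) {j : Ordinal} (hj : j < γ.cof.ord) :
    enumOrd s j < γ := by
  induction j using WellFoundedLT.induction with
  | _ j IH =>
  have hIH : ∀ i ∈ Iio j, enumOrd s i < γ := fun i hi ↦ IH i hi (hi.trans hj)
  have hcard : #(enumOrd s '' Iio j) < (lift.{u + 1} γ).cof := by
    rw [← lift_cof]
    refine mk_image_le.trans_lt ?_
    rw [Cardinal.mk_Iio_ordinal, Cardinal.lift_lt]
    exact lt_ord.1 hj
  have hsup := sSup_add_one_lt_of_lt_cof hcard (by rintro _ ⟨i, hi, rfl⟩; exact hIH i hi)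
  obtain ⟨c, hc, hsupc, hcγ⟩ := hs _ hsup
  refine (enumOrd_le_of_forall_lt hc fun i hi ↦ ?_).trans_lt hcγ
  refine (lt_add_one _).trans_le (le_trans ?_ hsupc)
  exact le_csSup bddAbove_of_small ⟨_, ⟨i, hi, rfl⟩, rfl⟩

theorem IsClubIn.sSup_mem_union_Ici {C : Set Ordinal} {γ : Ordinal} (hC : IsClubIn C γ)
    {t : Set Ordinal} (ht : t ⊆ C ∪ Ici γ) (hne : t.Nonempty) (hbdd : BddAbove t) :
    sSup t ∈ C ∪ Ici γ := by
  by_cases hγ : γ ≤ sSup t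
  · exact Or.inr hγ
  by_cases hmem : sSup t ∈ t
  · exact ht hmem
  have hlt : ∀ c ∈ t, c < sSup t := fun c hc ↦
    (le_csSup hbdd hc).lt_of_ne (ne_of_mem_of_not_mem hc hmem)
  have htC : ∀ c ∈ t, c ∈ C := fun c hc ↦
    (ht hc).resolve_right (not_le.2 ((hlt c hc).trans (not_le.1 hγ)))
  obtain ⟨c₀, hc₀⟩ := hne
  refine Or.inl (hC.2.2 _ (not_le.1 hγ) (zero_le.trans_lt (hlt c₀ hc₀)) fun β hβ ↦ ?_)
  obtain ⟨c, hc, hβc⟩ := (lt_csSup_iff hbdd ⟨c₀, hc₀⟩).1 hβ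
  exact ⟨c, htC c hc, hβc, hlt c hc⟩

/-- Adding `[κ, ∞)` to a club `C` of `κ` gives a closed unbounded class of ordinals, whose
enumeration is normal; its value at `μ.ord` is a point of `C` of cofinality `μ`. -/
theorem isStatIn_setOf_cof_eq {κ μ : Cardinal} (hκ : κ.IsRegular) (hμ : μ.IsRegular)
    (hμκ : μ < κ) : IsStatIn {α | α < κ.ord ∧ α.cof = μ} κ.ord := by
  intro C hC
  have hunbdd : ¬ BddAbove (C ∪ Ici κ.ord) := fun h ↦
    not_bddAbove_Ici κ.ord (h.mono subset_union_right)
  have hnormal := isNormal_enumOrd (fun _ ↦ hC.sSup_mem_union_Ici) hunbdd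
  have hlt : enumOrd (C ∪ Ici κ.ord) μ.ord < κ.ord := by
    refine enumOrd_lt_of_lt_ord_cof (fun β hβ ↦ ?_) (by rwa [hκ.cof_ord, ord_lt_ord])
    obtain ⟨c, hc, hβc⟩ := hC.2.1 β hβ
    exact ⟨c, Or.inl hc, hβc, hC.1 hc⟩
  refine ⟨_, ⟨hlt, ?_⟩, (enumOrd_mem hunbdd _).resolve_right (not_le.2 hlt)⟩
  rw [cof_map_of_isNormal hnormal (isSuccLimit_ord hμ.aleph0_le), hμ.cof_ord]

def ReflectsAt (S : Set Ordinal) (γ : Ordinal) : Prop :=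
  IsStatIn (S ∩ Iio γ) γ

theorem lift_card_le_lift_cof_of_reflectsAt {γ : Ordinal.{v}} (hγ : ℵ₀ < γ.cof)
    {ν : Ordinal.{u}} {T : Ordinal.{u} → Set Ordinal.{v}}
    (hdisj : ∀ i < ν, ∀ j < ν, i ≠ j → Disjoint (T i) (T j))
    (hT : ∀ i < ν, ReflectsAt (T i) γ) :
    Cardinal.lift.{v} ν.card ≤ Cardinal.lift.{u} γ.cof := by
  have hcof : Order.cof (Iio γ) = Cardinal.lift.{v + 1} γ.cof := by rw [cof_Iio, lift_cof]
  have := lift_mk_le_lift_cof_of_isStationary (ι := Iio ν)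
    (T := fun i ↦ Subtype.val ⁻¹' (T i ∩ Iio γ)) (by rwa [hcof, aleph0_lt_lift])
    (fun i ↦ isStatIn_iff_isStationary.1 (hT i i.2))
    (fun i j hij ↦ ((hdisj i i.2 j j.2 (Subtype.val_injective.ne hij)).mono
      inter_subset_left inter_subset_left).preimage _)
  rw [hcof, Cardinal.mk_Iio_ordinal, Cardinal.lift_lift, Cardinal.lift_lift] at this
  rw [← Cardinal.lift_le.{max (u + 1) (v + 1)}, Cardinal.lift_lift, Cardinal.lift_lift]
  exact this

theorem exists_isStatIn_setOf_not_reflectsAt {κ μ : Cardinal.{v}} {ν : Cardinal.{u}}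
    (hκ : κ.IsRegular) (hμ : μ.IsRegular) (hμ₀ : ℵ₀ < μ)
    (hμν : Cardinal.lift.{u} μ < Cardinal.lift.{v} ν)
    (hνκ : Cardinal.lift.{v} ν < Cardinal.lift.{u} κ) {T : Ordinal.{u} → Set Ordinal.{v}}
    (hdisj : ∀ i < ν.ord, ∀ j < ν.ord, i ≠ j → Disjoint (T i) (T j)) :
    ∃ i < ν.ord, IsStatIn {γ | (γ < κ.ord ∧ γ.cof = μ) ∧ ¬ ReflectsAt (T i) γ} κ.ord := by
  have hcover : {γ | γ < κ.ord ∧ γ.cof = μ} ⊆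
      ⋃ i : Iio ν.ord, {γ | (γ < κ.ord ∧ γ.cof = μ) ∧ ¬ ReflectsAt (T i) γ} := by
    intro γ hγ
    by_contra h
    have := lift_card_le_lift_cof_of_reflectsAt (hγ.2 ▸ hμ₀) hdisj fun i hi ↦
      not_not.1 fun hn ↦ h (mem_iUnion.2 ⟨⟨i, hi⟩, hγ, hn⟩)
    rw [card_ord, hγ.2] at this
    exact this.not_gt hμν
  have hμκ : μ < κ := Cardinal.lift_lt.1 (hμν.trans hνκ)
  have hstat := (isStatIn_iff_isStationary.1 (isStatIn_setOf_cof_eq hκ hμ hμκ)).mono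
    (preimage_mono hcover)
  have hcof : Order.cof (Iio κ.ord) = Cardinal.lift.{v + 1} κ := by
    rw [cof_Iio, ← lift_cof, hκ.cof_ord]
  have hcard :
      Cardinal.lift.{v + 1} #(Iio ν.ord) < Cardinal.lift.{u + 1} (Order.cof (Iio κ.ord)) := by
    rw [hcof, Cardinal.mk_Iio_ordinal, card_ord]
    simpa using Cardinal.lift_lt.{max u v, max (u + 1) (v + 1)}.2 hνκ
  rw [preimage_iUnion, isStationary_iUnion_iff (hcof ▸ (aleph0_lt_lift.2 (hμ₀.trans hμκ)).ne')
    hcard] at hstat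
  obtain ⟨⟨i, hi⟩, hi'⟩ := hstat
  exact ⟨i, hi, isStatIn_iff_isStationary.2 hi'⟩

theorem IsClubIn.preimage_lift {C : Set Ordinal.{max v u}} {γ : Ordinal.{v}}
    (hC : IsClubIn C (lift.{u} γ)) : IsClubIn (lift.{u} ⁻¹' C) γ := by
  refine ⟨fun x hx ↦ lift_lt.1 (hC.1 hx), fun β hβ ↦ ?_, fun α hαγ hα hlim ↦ ?_⟩
  · obtain ⟨c, hc, hβc⟩ := hC.2.1 _ (lift_lt.2 hβ)
    obtain ⟨c', -, rfl⟩ := lt_lift_iff.1 (hC.1 hc)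
    exact ⟨c', hc, lift_le.1 hβc⟩
  · refine hC.2.2 _ (lift_lt.2 hαγ) (by simpa only [Ordinal.lift_zero] using lift_lt.2 hα)
      fun β hβ ↦ ?_
    obtain ⟨β', -, rfl⟩ := lt_lift_iff.1 (hβ.trans (lift_lt.2 hαγ))
    obtain ⟨c, hc, hβc, hcα⟩ := hlim β' (lift_lt.1 hβ)
    exact ⟨lift c, hc, lift_lt.2 hβc, lift_lt.2 hcα⟩

theorem IsClubIn.image_lift {C : Set Ordinal.{v}} {γ : Ordinal.{v}} (hC : IsClubIn C γ) :
    IsClubIn (lift.{u} '' C) (lift.{u} γ) := by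
  refine ⟨?_, fun β hβ ↦ ?_, fun α hαγ hα hlim ↦ ?_⟩
  · rintro _ ⟨x, hx, rfl⟩
    exact lift_lt.2 (hC.1 hx)
  · obtain ⟨β', hβ', rfl⟩ := lt_lift_iff.1 hβ
    obtain ⟨c, hc, hβc⟩ := hC.2.1 β' hβ'
    exact ⟨lift c, mem_image_of_mem _ hc, lift_le.2 hβc⟩
  · obtain ⟨α', hα', rfl⟩ := lt_lift_iff.1 hαγ
    refine mem_image_of_mem _ (hC.2.2 α' hα' (lift_lt.1 (by rwa [Ordinal.lift_zero])) fun β hβ ↦ ?_)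
    obtain ⟨_, ⟨c, hc, rfl⟩, hβc, hcα⟩ := hlim (lift β) (lift_lt.2 hβ)
    exact ⟨c, hc, lift_lt.1 hβc, lift_lt.1 hcα⟩

theorem isStatIn_preimage_lift_iff {S : Set Ordinal.{max v u}} {γ : Ordinal.{v}} :
    IsStatIn (lift.{u} ⁻¹' S) γ ↔ IsStatIn S (lift.{u} γ) := by
  refine ⟨fun hS C hC ↦ ?_, fun hS C hC ↦ ?_⟩
  · obtain ⟨x, hxS, hxC⟩ := hS _ hC.preimage_lift
    exact ⟨_, hxS, hxC⟩
  · obtain ⟨_, hxS, x, hxC, rfl⟩ := hS _ hC.image_lift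
    exact ⟨x, hxS, hxC⟩

/-- The copy in `Ordinal.{w}` of a set of ordinals in `Ordinal.{v}`: the theorem lets the family `T`
and the sets `S`, `A` live in independent universes. -/
def Ordinal.transferSet (S : Set Ordinal.{v}) : Set Ordinal.{w} :=
  lift.{v} ⁻¹' (lift.{w} '' S)

theorem Disjoint.transferSet {S S' : Set Ordinal.{v}} (h : Disjoint S S') :
    Disjoint (transferSet.{v, w} S) (transferSet S') :=
  ((disjoint_image_iff fun _ _ ↦ Ordinal.lift_inj.1).2 h).preimage _

theorem IsStatIn.transferSet {S : Set Ordinal.{v}} {γ : Ordinal.{v}} {γ' : Ordinal.{w}}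
    (hγ : lift.{w} γ = lift.{v} γ') (hS : IsStatIn S γ) : IsStatIn (transferSet S) γ' := by
  rw [Ordinal.transferSet, isStatIn_preimage_lift_iff, ← hγ, ← isStatIn_preimage_lift_iff,
    preimage_image_eq _ fun _ _ ↦ Ordinal.lift_inj.1]
  exact hS

theorem Ordinal.lt_ord_aleph_natCast_iff_of_lift_eq {x : Ordinal.{v}} {y : Ordinal.{w}}
    (h : lift.{w} x = lift.{v} y) (n : ℕ) : x < (ℵ_ n).ord ↔ y < (ℵ_ n).ord := by
  rw [← lift_lt.{w}, h]
  simp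

theorem Ordinal.cof_eq_aleph_natCast_iff_of_lift_eq {x : Ordinal.{v}} {y : Ordinal.{w}}
    (h : lift.{w} x = lift.{v} y) (k : ℕ) : x.cof = ℵ_ k ↔ y.cof = ℵ_ k := by
  rw [← Cardinal.lift_inj.{v, w} (a := x.cof), ← Cardinal.lift_inj.{w, v} (a := y.cof), lift_cof,
    lift_cof, h]
  simp

theorem Cardinal.isRegular_aleph_natCast {n : ℕ} (hn : n ≠ 0) : (ℵ_ n).IsRegular := by
  obtain ⟨n, rfl⟩ := Nat.exists_eq_succ_of_ne_zero hn
  simpa using isRegular_aleph_add_one n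

/-- For `k < m < n - 1`, assuming `{α < ω_n : cf α = ω_k}` contains
`ω_{m+1}`-many pairwise disjoint stationary subsets, there are stationary sets
`S ⊆ {α < ω_n : cf α = ω_k}` and `A ⊆ {α < ω_n : cf α = ω_m}` such that
`S ∩ γ` is nonstationary in `γ` for every `γ ∈ A`. -/
theorem stmt2 (k m n : ℕ) (hkm : k < m) (hmn : m + 1 < n)
    (T : Ordinal → Set Ordinal)
    (hT : ∀ i < (Cardinal.aleph (m + 1)).ord,
      T i ⊆ {α | α < (Cardinal.aleph n).ord ∧ Ordinal.cof α = Cardinal.aleph k} ∧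
      IsStatIn (T i) (Cardinal.aleph n).ord)
    (hdisj : ∀ i < (Cardinal.aleph (m + 1)).ord, ∀ j < (Cardinal.aleph (m + 1)).ord,
      i ≠ j → T i ∩ T j = ∅) :
    ∃ S A : Set Ordinal,
      S ⊆ {α | α < (Cardinal.aleph n).ord ∧ Ordinal.cof α = Cardinal.aleph k} ∧
      IsStatIn S (Cardinal.aleph n).ord ∧
      A ⊆ {α | α < (Cardinal.aleph n).ord ∧ Ordinal.cof α = Cardinal.aleph m} ∧
      IsStatIn A (Cardinal.aleph n).ord ∧
      ∀ γ ∈ A, ¬ IsStatIn (S ∩ Set.Iio γ) γ := by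
  obtain ⟨i, hi, hA⟩ := exists_isStatIn_setOf_not_reflectsAt
    (κ := ℵ_ n) (μ := ℵ_ m) (ν := ℵ_ (m + 1)) (T := fun i ↦ Ordinal.transferSet (T i))
    (isRegular_aleph_natCast (by omega)) (isRegular_aleph_natCast (by omega))
    (by simpa using hkm.pos) (by simp) (by simp; exact_mod_cast hmn)
    fun i hi j hj hij ↦ (disjoint_iff_inter_eq_empty.2 (hdisj i hi j hj hij)).transferSet
  refine ⟨_, _, ?_, (hT i hi).2.transferSet (by simp), fun γ hγ ↦ hγ.1, hA,
    fun γ hγ ↦ hγ.2⟩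
  rintro y ⟨x, hx, hxy⟩
  exact ⟨(lt_ord_aleph_natCast_iff_of_lift_eq hxy n).1 ((hT i hi).1 hx).1,
    (cof_eq_aleph_natCast_iff_of_lift_eq hxy k).1 ((hT i hi).1 hx).2⟩
end

section
/- Suppose A ⊆ {γ < ω₃ : cf γ = ω₁} is stationary with a square sequence ⟨C_γ : γ ∈ A⟩ (each C_γ club in γ of order type ω₁, coherent: α ∈ C_{γ₁} ∩ C_{γ₂} implies C_{γ₁} ∩ α = C_{γ₂} ∩ α). Then there exist stationary sets S_i ⊆ {α < ω₃ : cf α < ω₁} for i < ω₁ such that Tr(S_i) ∩ A = ∅ for each i, but A ⊆ Tr(⋃_{i<ω₁} S_i). -/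
/-- The trace of `S` (below `ω₃`): points of uncountable cofinality at which `S`
reflects. -/
def Tr3 (S : Set Ordinal) : Set Ordinal :=
  {γ | γ < (Cardinal.aleph 3).ord ∧ Cardinal.aleph0 < Ordinal.cof γ ∧
    IsStatIn (S ∩ Set.Iio γ) γ}

/-!
Let `S_ξ` be the set of accumulation points `α` of some `C γ`, `γ ∈ A`, with
`otp (C γ ∩ α) = ξ`. By coherence, `S_ξ` meets each `C γ` in at most one point, so it does not
reflect at any `γ ∈ A`. On the other hand every club of `γ ∈ A` contains an accumulation point of
`C γ`, so `⋃_{ξ < ω₁} S_ξ` reflects at every point of `A`; as `A` is stationary, this union is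
stationary in `ω₃`, and since `cf ω₃ > ω₁` some `S_{ξ₀}` is stationary. The sets `S_ξ ∪ S_{ξ₀}`
are then stationary and still meet each `C γ` in at most two points.
-/

open Ordinal Cardinal Set Filter Topology Order

universe u v w

section Club

variable {γ α β : Ordinal.{u}} {C D E S T : Set Ordinal.{u}}

theorem accPt_iff_exists_between :
    AccPt α (𝓟 D) ↔ 0 < α ∧ ∀ β < α, ∃ c ∈ D, β < c ∧ c < α := by
  simp [SuccOrder.accPt_principal, Set.Nonempty, pos_iff_ne_zero]

theorem IsClubIn.mem_of_accPt (hC : IsClubIn C γ) (hα : α < γ) (h : AccPt α (𝓟 C)) : α ∈ C :=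
  hC.2.2 α hα (accPt_iff_exists_between.1 h).1 (accPt_iff_exists_between.1 h).2

theorem IsClubIn.exists_between (hC : IsClubIn C γ) (hγ : IsSuccLimit γ) (hβ : β < γ) :
    ∃ c ∈ C, β < c ∧ c < γ := by
  obtain ⟨c, hc, hβc⟩ := hC.2.1 (succ β) (hγ.succ_lt hβ)
  exact ⟨c, hc, (lt_succ β).trans_le hβc, hC.1 hc⟩

theorem isClubIn_of_forall_accPt (hsub : C ⊆ Iio γ)
    (hub : ∀ β < γ, ∃ α ∈ C, β ≤ α) (hcl : ∀ α < γ, AccPt α (𝓟 C) → α ∈ C) :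
    IsClubIn C γ :=
  ⟨hsub, hub, fun α hα h0 h => hcl α hα (accPt_iff_exists_between.2 ⟨h0, h⟩)⟩

theorem exists_forall_accPt (hγ : ℵ₀ < γ.cof) {ι : Type w}
    (hι : Cardinal.lift.{u} #ι < (Ordinal.lift.{w} γ).cof) {D : ι → Set Ordinal.{u}}
    (hD : ∀ i, IsClubIn (D i) γ) (hβ : β < γ) :
    ∃ α, β ≤ α ∧ α < γ ∧ ∀ i, AccPt α (𝓟 (D i)) := by
  have hlim : IsSuccLimit γ := one_lt_cof_iff.1 (one_lt_aleph0.trans hγ)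
  -- `α` is the supremum of the `ω` iterates of `next` from `β`; it stays below `γ` as `cof γ > ℵ₀`.
  choose c hcD hlt hcγ using fun i (x : Iio γ) => (hD i).exists_between hlim x.2
  let next (x : Iio γ) : Iio γ :=
    ⟨max (succ x.1) (⨆ i, c i x), max_lt (hlim.succ_lt x.2) (lift_iSup_lt_of_lt_cof hι (hcγ · x))⟩
  have hnext (x : Iio γ) : x.1 < (next x).1 := (lt_succ _).trans_le (le_max_left _ _)
  have hc_le (i) (x : Iio γ) : c i x ≤ (next x).1 :=
    (le_ciSup (f := (c · x)) ⟨γ, by rintro _ ⟨j, rfl⟩; exact (hcγ j x).le⟩ i).trans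
      (le_max_right _ _)
  let g (n : ℕ) : Iio γ := next^[n] ⟨β, hβ⟩
  have hg (n : ℕ) : g (n + 1) = next (g n) := Function.iterate_succ_apply' next n _
  have hg_le (n : ℕ) : (g n).1 ≤ ⨆ m, (g m).1 := Ordinal.le_iSup (fun m => (g m).1) n
  have hg_lt (n : ℕ) : (g n).1 < ⨆ m, (g m).1 := by
    have := hg_le (n + 1)
    rw [hg] at this
    exact (hnext (g n)).trans_le this
  refine ⟨⨆ m, (g m).1, hg_le 0, lift_iSup_lt_of_lt_cof ?_ (fun n => (g n).2), fun i => ?_⟩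
  · simpa [← lift_cof] using hγ
  refine accPt_iff_exists_between.2 ⟨pos_of_gt (hg_lt 0), fun b hb => ?_⟩
  obtain ⟨n, hn⟩ := Ordinal.lt_iSup_iff.1 hb
  refine ⟨c i (g n), hcD i _, hn.trans (hlt i _), (hc_le i _).trans_lt ?_⟩
  rw [← hg]
  exact hg_lt (n + 1)

theorem IsClubIn.iInter (hγ : ℵ₀ < γ.cof) {ι : Type w} [Nonempty ι]
    (hι : Cardinal.lift.{u} #ι < (Ordinal.lift.{w} γ).cof) {D : ι → Set Ordinal.{u}}
    (hD : ∀ i, IsClubIn (D i) γ) : IsClubIn (⋂ i, D i) γ := by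
  refine isClubIn_of_forall_accPt
    ((iInter_subset _ (Classical.arbitrary ι)).trans (hD _).1) (fun β hβ => ?_) ?_
  · obtain ⟨α, hβα, hαγ, hacc⟩ := exists_forall_accPt hγ hι hD hβ
    exact ⟨α, mem_iInter.2 fun i => (hD i).mem_of_accPt hαγ (hacc i), hβα⟩
  · exact fun α hα hacc => mem_iInter.2 fun i =>
      (hD i).mem_of_accPt hα (hacc.mono (monotone_principal (iInter_subset _ i)))

theorem IsClubIn.setOf_accPt (hγ : ℵ₀ < γ.cof) (hD : IsClubIn D γ) :
    IsClubIn {α | α < γ ∧ AccPt α (𝓟 D)} γ := by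
  have hι : Cardinal.lift.{u} #PUnit.{u + 1} < (Ordinal.lift.{u} γ).cof := by
    simpa [← lift_cof] using one_lt_aleph0.trans hγ
  refine isClubIn_of_forall_accPt (fun α hα => hα.1) (fun β hβ => ?_) (fun α hα hacc => ⟨hα, ?_⟩)
  · obtain ⟨α, hβα, hαγ, hacc⟩ := exists_forall_accPt hγ hι (fun _ => hD) hβ
    exact ⟨α, ⟨hαγ, hacc PUnit.unit⟩, hβα⟩
  · refine accPt_iff_exists_between.2 ⟨(accPt_iff_exists_between.1 hacc).1, fun b hb => ?_⟩
    obtain ⟨c, hc, hbc, hcα⟩ := (accPt_iff_exists_between.1 hacc).2 b hb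
    exact ⟨c, hD.mem_of_accPt hc.1 hc.2, hbc, hcα⟩

theorem IsClubIn.exists_accPt_mem (hγ : ℵ₀ < γ.cof) (hC : IsClubIn C γ) (hE : IsClubIn E γ) :
    ∃ α ∈ E, AccPt α (𝓟 C) ∧ α ∈ C := by
  have hι : Cardinal.lift.{u} #Bool < (Ordinal.lift.{0} γ).cof := by
    simpa [← lift_cof] using (natCast_lt_aleph0 (n := 2)).trans hγ
  have hpos : 0 < γ := one_lt_cof_iff.1 (one_lt_aleph0.trans hγ) |>.bot_lt
  obtain ⟨α, -, hαγ, hacc⟩ :=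
    exists_forall_accPt hγ hι (D := fun b => cond b C E) (Bool.rec hE hC) hpos
  exact ⟨α, hE.mem_of_accPt hαγ (hacc false), hacc true, hC.mem_of_accPt hαγ (hacc true)⟩

theorem IsClubIn.inter_Iio_of_accPt {δ : Ordinal.{u}} (hE : IsClubIn E δ) (hγδ : γ < δ)
    (hγ : AccPt γ (𝓟 E)) : IsClubIn (E ∩ Iio γ) γ := by
  refine isClubIn_of_forall_accPt inter_subset_right (fun β hβ => ?_) (fun α hα hacc => ?_)
  · obtain ⟨c, hc, hβc, hcγ⟩ := (accPt_iff_exists_between.1 hγ).2 β hβ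
    exact ⟨c, ⟨hc, hcγ⟩, hβc.le⟩
  · exact ⟨hE.mem_of_accPt (hα.trans hγδ) (hacc.mono (monotone_principal inter_subset_left)), hα⟩

theorem IsClubIn.inter_Ioi (hC : IsClubIn C γ) (hγ : IsSuccLimit γ) {p : Ordinal.{u}}
    (hp : p < γ) : IsClubIn (C ∩ Ioi p) γ := by
  refine isClubIn_of_forall_accPt (inter_subset_left.trans hC.1) (fun β hβ => ?_) ?_
  · obtain ⟨c, hc, hc', -⟩ := hC.exists_between hγ (max_lt hβ hp)
    exact ⟨c, ⟨hc, (le_max_right _ _).trans_lt hc'⟩, (le_max_left _ _).trans hc'.le⟩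
  · intro α hα hacc
    obtain ⟨hα₀, hbetween⟩ := accPt_iff_exists_between.1 hacc
    obtain ⟨c, hc, -, hcα⟩ := hbetween 0 hα₀
    exact ⟨hC.mem_of_accPt hα (hacc.mono (monotone_principal inter_subset_left)), hc.2.trans hcα⟩

theorem IsStatIn.mono (hS : IsStatIn S γ) (h : S ⊆ T) : IsStatIn T γ :=
  fun E hE => (hS E hE).mono (inter_subset_inter_left _ h)

theorem isStatIn_inter_Iio : IsStatIn (S ∩ Iio γ) γ ↔ IsStatIn S γ := by
  refine ⟨fun h => h.mono inter_subset_left, fun h E hE => ?_⟩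
  obtain ⟨x, hxS, hxE⟩ := h E hE
  exact ⟨x, ⟨hxS, hE.1 hxE⟩, hxE⟩

theorem IsClubIn.not_isStatIn_of_finite (hC : IsClubIn C γ) (hγ : IsSuccLimit γ)
    (hfin : (S ∩ C).Finite) : ¬ IsStatIn S γ := by
  obtain ⟨p, hpγ, hp⟩ : ∃ p < γ, ∀ x ∈ S ∩ C, x ≤ p := by
    rcases (S ∩ C).eq_empty_or_nonempty with h | h
    · exact ⟨0, hγ.bot_lt, by simp [h]⟩
    · obtain ⟨p, hp, hmax⟩ := exists_max_image _ id hfin h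
      exact ⟨p, hC.1 hp.2, hmax⟩
  intro hS
  obtain ⟨x, hxS, hxC, hpx⟩ := hS _ (hC.inter_Ioi hγ hpγ)
  exact (hp x ⟨hxS, hxC⟩).not_gt hpx

theorem IsStatIn.exists_of_iUnion (hγ : ℵ₀ < γ.cof) {ι : Type w} [Nonempty ι]
    (hι : Cardinal.lift.{u} #ι < (Ordinal.lift.{w} γ).cof) {T : ι → Set Ordinal.{u}}
    (h : IsStatIn (⋃ i, T i) γ) : ∃ i, IsStatIn (T i) γ := by
  by_contra! hT
  simp only [IsStatIn, not_forall, exists_prop, not_nonempty_iff_eq_empty] at hT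
  choose E hE hTE using hT
  obtain ⟨x, hxT, hxE⟩ := h _ (IsClubIn.iInter hγ hι hE)
  obtain ⟨i, hi⟩ := mem_iUnion.1 hxT
  exact (hTE i).subset ⟨hi, mem_iInter.1 hxE i⟩

theorem IsStatIn.of_forall_isStatIn (hγ : ℵ₀ < γ.cof) {A : Set Ordinal.{u}}
    (hA : IsStatIn A γ) (hS : ∀ δ ∈ A, IsStatIn S δ) : IsStatIn S γ := by
  intro E hE
  obtain ⟨δ, hδA, hδγ, hδE⟩ := hA _ (hE.setOf_accPt hγ)
  obtain ⟨x, hxS, hxE, -⟩ := hS δ hδA _ (hE.inter_Iio_of_accPt hδγ hδE)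
  exact ⟨x, hxS, hxE⟩

end Club

theorem otp_inter_Iio_lt {s : Set Ordinal.{u}} {α : Ordinal.{u}} (h : α ∈ s) :
    otp (s ∩ Iio α) < otp s := by
  have e : otp (s ∩ Iio α) = typein ((· < ·) : s → s → Prop) ⟨α, h⟩ := by
    rw [← type_subrel]
    exact type_eq.2 ⟨⟨⟨fun x => ⟨⟨x.1, x.2.1⟩, x.2.2⟩, fun y => ⟨y.1.1, y.1.2, y.2⟩,
      fun _ => rfl, fun _ => rfl⟩, Iff.rfl⟩⟩
  exact e ▸ typein_lt_type _ _

theorem otp_inter_Iio_injOn (s : Set Ordinal.{u}) : InjOn (fun α => otp (s ∩ Iio α)) s := by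
  have key {a b : Ordinal.{u}} (ha : a ∈ s) (hab : a < b) :
      otp (s ∩ Iio a) < otp (s ∩ Iio b) := by
    have h := otp_inter_Iio_lt (s := s ∩ Iio b) ⟨ha, hab⟩
    rwa [inter_assoc, Iio_inter_Iio, min_eq_right hab.le] at h
  intro a ha b hb hab
  rcases lt_trichotomy a b with h | h | h
  · exact absurd hab (key ha h).ne
  · exact h
  · exact absurd hab (key hb h).ne'

theorem lift_cof_le_mk_inter_Iio {s : Set Ordinal.{u}} {α : Ordinal.{u}} (h : AccPt α (𝓟 s)) :
    (Ordinal.lift.{u + 1} α).cof ≤ #(s ∩ Iio α : Set Ordinal.{u}) := by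
  by_contra! hlt
  have hsup := sSup_lt_of_lt_cof hlt fun x hx => hx.2
  obtain ⟨c, hc, hsc, hcα⟩ := (accPt_iff_exists_between.1 h).2 _ hsup
  exact hsc.not_ge (le_csSup ⟨α, fun x hx => hx.2.le⟩ ⟨hc, hcα⟩)

theorem cof_lt_aleph_one_of_accPt {s : Set Ordinal.{u}} {α : Ordinal.{u}} (h : AccPt α (𝓟 s))
    (hs : otp (s ∩ Iio α) < (ℵ_ 1).ord) : α.cof < ℵ_ 1 := by
  have hcard : #(s ∩ Iio α : Set Ordinal.{u}) < ℵ_ 1 := by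
    simpa only [otp, card_type] using Cardinal.lt_ord.1 hs
  have := (lift_cof_le_mk_inter_Iio h).trans_lt hcard
  simpa [← lift_cof] using this

section Square

def IsCoherent (A : Set Ordinal.{u}) (C : Ordinal.{u} → Set Ordinal.{u}) : Prop :=
  ∀ γ₁ ∈ A, ∀ γ₂ ∈ A, ∀ α, α ∈ C γ₁ ∩ C γ₂ → C γ₁ ∩ Iio α = C γ₂ ∩ Iio α

/-- The paper's `S_ξ`, restricted to accumulation points of the `C γ` so that its points have
countable cofinality. Comparing the order type with `ξ` through `Ordinal.lift` lets `ξ` live in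
any universe. -/
def squareLevel (A : Set Ordinal.{u}) (C : Ordinal.{u} → Set Ordinal.{u}) (ξ : Ordinal.{v}) :
    Set Ordinal.{u} :=
  {α | ∃ γ ∈ A, α ∈ C γ ∧ AccPt α (𝓟 (C γ)) ∧
    Ordinal.lift.{v} (otp (C γ ∩ Iio α)) = Ordinal.lift.{u + 1} ξ}

variable {A : Set Ordinal.{u}} {C : Ordinal.{u} → Set Ordinal.{u}} {γ α δ : Ordinal.{u}}

theorem squareLevel_inter_subsingleton (hcoh : IsCoherent A C) (hγ : γ ∈ A) (ξ : Ordinal.{v}) :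
    (squareLevel A C ξ ∩ C γ).Subsingleton := by
  have key {x : Ordinal.{u}} (hx : x ∈ squareLevel A C ξ) (hxC : x ∈ C γ) :
      Ordinal.lift.{v} (otp (C γ ∩ Iio x)) = Ordinal.lift.{u + 1} ξ := by
    obtain ⟨δ, hδ, hxδ, -, hξ⟩ := hx
    rwa [← hcoh δ hδ γ hγ x ⟨hxδ, hxC⟩]
  rintro x ⟨hx, hxC⟩ y ⟨hy, hyC⟩
  exact otp_inter_Iio_injOn _ hxC hyC (Ordinal.lift_inj.1 ((key hx hxC).trans (key hy hyC).symm))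

theorem squareLevel_subset (hA : ∀ γ ∈ A, γ < δ) (hclub : ∀ γ ∈ A, IsClubIn (C γ) γ)
    (hotp : ∀ γ ∈ A, otp (C γ) = (ℵ_ 1).ord) (ξ : Ordinal.{v}) :
    squareLevel A C ξ ⊆ {α | α < δ ∧ α.cof < ℵ_ 1} := by
  rintro α ⟨γ, hγ, hαC, hacc, -⟩
  exact ⟨((hclub γ hγ).1 hαC).trans (hA γ hγ),
    cof_lt_aleph_one_of_accPt hacc ((otp_inter_Iio_lt hαC).trans_eq (hotp γ hγ))⟩

theorem exists_mem_squareLevel (hotp : ∀ γ ∈ A, otp (C γ) = (ℵ_ 1).ord) (hγ : γ ∈ A)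
    (hαC : α ∈ C γ) (hacc : AccPt α (𝓟 (C γ))) :
    ∃ i < ((ℵ_ 1).ord : Ordinal.{v}), α ∈ squareLevel A C i := by
  have hξ : Ordinal.lift.{v} (otp (C γ ∩ Iio α)) <
      Ordinal.lift.{u + 1} ((ℵ_ 1).ord : Ordinal.{v}) := by
    simpa using Ordinal.lift_lt.{v}.2 ((otp_inter_Iio_lt hαC).trans_eq (hotp γ hγ))
  obtain ⟨i, hi, hlift⟩ := Ordinal.lt_lift_iff.1 hξ
  exact ⟨i, hi, γ, hγ, hαC, hacc, hlift.symm⟩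

theorem isStatIn_iUnion_squareLevel (hclub : ∀ γ ∈ A, IsClubIn (C γ) γ)
    (hotp : ∀ γ ∈ A, otp (C γ) = (ℵ_ 1).ord) (hγ : γ ∈ A) (hcof : ℵ₀ < γ.cof) :
    IsStatIn (⋃ i ∈ Iio ((ℵ_ 1).ord : Ordinal.{v}), squareLevel A C i) γ := by
  intro E hE
  obtain ⟨α, hαE, hacc, hαC⟩ := (hclub γ hγ).exists_accPt_mem hcof hE
  obtain ⟨i, hi, hαi⟩ := exists_mem_squareLevel hotp hγ hαC hacc
  exact ⟨α, mem_biUnion hi hαi, hαE⟩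

theorem exists_isStatIn_squareLevel (hδ : ℵ_ 1 < δ.cof) (hAstat : IsStatIn A δ)
    (hclub : ∀ γ ∈ A, IsClubIn (C γ) γ) (hotp : ∀ γ ∈ A, otp (C γ) = (ℵ_ 1).ord)
    (hcof : ∀ γ ∈ A, ℵ₀ < γ.cof) :
    ∃ i < ((ℵ_ 1).ord : Ordinal.{v}), IsStatIn (squareLevel A C i) δ := by
  have hδ₀ : ℵ₀ < δ.cof := aleph0_lt_aleph_one.trans hδ
  have hunion : IsStatIn (⋃ i ∈ Iio ((ℵ_ 1).ord : Ordinal.{v}), squareLevel A C i) δ :=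
    hAstat.of_forall_isStatIn hδ₀ fun γ hγ => isStatIn_iUnion_squareLevel hclub hotp hγ (hcof γ hγ)
  rw [biUnion_eq_iUnion] at hunion
  have : Nonempty (Iio ((ℵ_ 1).ord : Ordinal.{v})) := ⟨0, ord_pos.2 (aleph_pos 1)⟩
  have hι : Cardinal.lift.{u} #(Iio ((ℵ_ 1).ord : Ordinal.{v})) < (Ordinal.lift.{v + 1} δ).cof := by
    simpa [← lift_cof] using hδ
  obtain ⟨⟨i, hi⟩, hstat⟩ := hunion.exists_of_iUnion hδ₀ hι
  exact ⟨i, hi, hstat⟩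

end Square

/-- If `A ⊆ {γ < ω₃ : cf γ = ω₁}` is stationary with a square
sequence, then there are stationary `S i ⊆ {α < ω₃ : cf α < ω₁}` (`i < ω₁`) with
`Tr(S i) ∩ A = ∅` for each `i` but `A ⊆ Tr(⋃_{i<ω₁} S i)`. -/
theorem stmt8
    (A : Set Ordinal)
    (hA : A ⊆ {γ | γ < (Cardinal.aleph 3).ord ∧ Ordinal.cof γ = Cardinal.aleph 1})
    (hAstat : IsStatIn A (Cardinal.aleph 3).ord)
    (C : Ordinal → Set Ordinal)
    (hclub : ∀ γ ∈ A, IsClubIn (C γ) γ)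
    (hotp : ∀ γ ∈ A, otp (C γ) = (Cardinal.aleph 1).ord)
    (hcoh : ∀ γ₁ ∈ A, ∀ γ₂ ∈ A, ∀ α, α ∈ C γ₁ ∩ C γ₂ →
      C γ₁ ∩ Set.Iio α = C γ₂ ∩ Set.Iio α) :
    ∃ S : Ordinal → Set Ordinal,
      (∀ i < (Cardinal.aleph 1).ord,
        S i ⊆ {α | α < (Cardinal.aleph 3).ord ∧ Ordinal.cof α < Cardinal.aleph 1} ∧
        IsStatIn (S i) (Cardinal.aleph 3).ord ∧
        Tr3 (S i) ∩ A = ∅) ∧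
      A ⊆ Tr3 (⋃ i ∈ Set.Iio (Cardinal.aleph 1).ord, S i) := by
  have hω₃ : ℵ_ 1 < (ℵ_ 3).ord.cof := by
    rw [show (3 : Ordinal) = 2 + 1 by norm_num, (isRegular_aleph_add_one 2).cof_ord]
    exact aleph_lt_aleph.2 (by norm_num)
  have hcof (γ) (hγ : γ ∈ A) : ℵ₀ < γ.cof := (hA hγ).2 ▸ aleph0_lt_aleph_one
  have hsub := squareLevel_subset (fun γ hγ => (hA hγ).1) hclub hotp
  obtain ⟨i₀, -, hi₀⟩ := exists_isStatIn_squareLevel hω₃ hAstat hclub hotp hcof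
  refine ⟨fun i => squareLevel A C i ∪ squareLevel A C i₀, fun i _ => ⟨?_, ?_, ?_⟩, fun γ hγ => ?_⟩
  · exact union_subset (hsub i) (hsub i₀)
  · exact hi₀.mono subset_union_right
  · refine eq_empty_iff_forall_notMem.2 ?_
    rintro γ ⟨⟨-, -, hrefl⟩, hγ⟩
    have hfin : ((squareLevel A C i ∪ squareLevel A C i₀) ∩ C γ).Finite := by
      rw [union_inter_distrib_right]
      exact (squareLevel_inter_subsingleton hcoh hγ i).finite.union
        (squareLevel_inter_subsingleton hcoh hγ i₀).finite
    exact (hclub γ hγ).not_isStatIn_of_finite (one_lt_cof_iff.1 (one_lt_aleph0.trans (hcof γ hγ)))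
      hfin (isStatIn_inter_Iio.1 hrefl)
  · refine ⟨(hA hγ).1, hcof γ hγ, isStatIn_inter_Iio.2 ?_⟩
    exact (isStatIn_iUnion_squareLevel hclub hotp hγ (hcof γ hγ)).mono
      (biUnion_mono subset_rfl fun _ _ => subset_union_left)
end
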